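/- arXiv:1801.09532 — 2 statements merged into one kernel-verified Lean document; each statement's English description precedes it below -/
import Mathlib

section
/- Let C be a category with finite phased coproducts all of whose coprojections are monic, with transitive phases, and with a phase generator I. Then the category GP(C) has finite coproducts with monic coprojections. Concretely: any object 0̂ = 0 +̇ I with 0 initial in C is initial in GP(C); and for objects Â = A +̇ I and B̂ = B +̇ I of GP(C), any phased coproduct (A +̇ B) +̇ I together with the morphisms κ̂_A : Â → (A +̇ B) +̇ I and κ̂_B : B̂ → (A +̇ B) +̇ I of GP(C) satisfying κ̂_A ∘ κ_A = κ_{A+̇B} ∘ κ_A and κ̂_B ∘ κ_B = κ_{A+̇B} ∘ κ_B forms a coproduct of Â and B̂ in GP(C). -/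
open CategoryTheory CategoryTheory.Limits

universe v u

variable {C : Type u} [Category.{v} C]

/-- Binary phased coproduct. -/
structure IsPhasedCoproduct₂ (A B P : C) (κA : A ⟶ P) (κB : B ⟶ P) : Prop where
  lift : ∀ {D : C} (f : A ⟶ D) (g : B ⟶ D), ∃ h : P ⟶ D, κA ≫ h = f ∧ κB ≫ h = g
  phase : ∀ {D : C} (h h' : P ⟶ D), κA ≫ h = κA ≫ h' → κB ≫ h = κB ≫ h' →
    ∃ U : P ⟶ P, (κA ≫ U = κA ∧ κB ≫ U = κB) ∧ h' = U ≫ h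

/-- The category has phased coproducts of every pair of objects. -/
def HasPhasedCoproducts₂ (C : Type u) [Category.{v} C] : Prop :=
  ∀ A B : C, ∃ (P : C) (κA : A ⟶ P) (κB : B ⟶ P), IsPhasedCoproduct₂ A B P κA κB

/-- All coprojections of binary phased coproducts are monic. -/
def MonicPhasedCoproducts (C : Type u) [Category.{v} C] : Prop :=
  ∀ {A B P : C} {κA : A ⟶ P} {κB : B ⟶ P},
    IsPhasedCoproduct₂ A B P κA κB → Mono κA ∧ Mono κB

/-- Transitive phases: diagonal morphisms intertwine phases with phases. -/
def PhasesTransitive (C : Type u) [Category.{v} C] : Prop :=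
  ∀ {A B P : C} {κA : A ⟶ P} {κB : B ⟶ P} {A' B' P' : C} {κA' : A' ⟶ P'} {κB' : B' ⟶ P'},
    IsPhasedCoproduct₂ A B P κA κB → IsPhasedCoproduct₂ A' B' P' κA' κB' →
    ∀ f : P ⟶ P', (∃ g, κA ≫ f = g ≫ κA') → (∃ h, κB ≫ f = h ≫ κB') →
    ∀ U : P ⟶ P, κA ≫ U = κA → κB ≫ U = κB →
    ∃ V : P' ⟶ P', (κA' ≫ V = κA' ∧ κB' ≫ V = κB') ∧ U ≫ f = f ≫ V

/-- Phase generator: codiagonals out of `Gen +̇ Gen` are phase monic, and diagonal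
monomorphisms out of `Gen +̇ Gen` are phase epic. -/
structure IsPhaseGenerator (Gen : C) : Prop where
  phaseMonic : ∀ {P : C} {κ₁ κ₂ : Gen ⟶ P}, IsPhasedCoproduct₂ Gen Gen P κ₁ κ₂ →
    ∀ d : P ⟶ Gen, κ₁ ≫ d = 𝟙 Gen → κ₂ ≫ d = 𝟙 Gen →
    ∀ U V : P ⟶ P, (κ₁ ≫ U = κ₁ ∧ κ₂ ≫ U = κ₂) → (κ₁ ≫ V = κ₁ ∧ κ₂ ≫ V = κ₂) →
      U ≫ d = V ≫ d → U = V
  phaseEpic : ∀ {P : C} {κ₁ κ₂ : Gen ⟶ P}, IsPhasedCoproduct₂ Gen Gen P κ₁ κ₂ →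
    ∀ {A B Q : C} {κA : A ⟶ Q} {κB : B ⟶ Q}, IsPhasedCoproduct₂ A B Q κA κB →
    ∀ m : P ⟶ Q, Mono m → (∃ g, κ₁ ≫ m = g ≫ κA) → (∃ h, κ₂ ≫ m = h ≫ κB) →
    ∀ U V : Q ⟶ Q, (κA ≫ U = κA ∧ κB ≫ U = κB) → (κA ≫ V = κA ∧ κB ≫ V = κB) →
      m ≫ U = m ≫ V → U = V

/-- Objects of the category `GP(C)`: phased coproducts of the form `A +̇ Gen`. -/
structure GPObj (C : Type u) [Category.{v} C] (Gen : C) where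
  base : C
  tot : C
  ι : base ⟶ tot
  ιI : Gen ⟶ tot
  isPC : IsPhasedCoproduct₂ base Gen tot ι ιI

/-- Morphisms of `GP(C)`: morphisms between the totals which preserve the
`Gen`-coprojection and are diagonal. -/
@[ext]
structure GPHom {C : Type u} [Category.{v} C] {Gen : C} (X Y : GPObj C Gen) where
  f : X.tot ⟶ Y.tot
  unit : X.ιI ≫ f = Y.ιI
  diag : ∃ g : X.base ⟶ Y.base, X.ι ≫ f = g ≫ Y.ι

instance {Gen : C} : Category (GPObj C Gen) where
  Hom := GPHom
  id X := ⟨𝟙 X.tot, Category.comp_id _, ⟨𝟙 X.base, by simp⟩⟩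
  comp {X Y Z} f g := ⟨f.f ≫ g.f,
    by rw [← Category.assoc, f.unit, g.unit],
    by
      obtain ⟨u, hu⟩ := f.diag
      obtain ⟨v, hv⟩ := g.diag
      exact ⟨u ≫ v, by rw [← Category.assoc, hu, Category.assoc, hv, ← Category.assoc]⟩⟩
  id_comp f := GPHom.ext (Category.id_comp f.f)
  comp_id f := GPHom.ext (Category.comp_id f.f)
  assoc f g h := GPHom.ext (Category.assoc f.f g.f h.f)

/-- The underlying morphism in `C` of a morphism of `GP(C)`. -/
def GPHom.tot {Gen : C} {X Y : GPObj C Gen} (f : X ⟶ Y) : X.tot ⟶ Y.tot :=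
  GPHom.f f

/-- `u` is "the" diagonal component of the `GP(C)`-morphism `f`. -/
def GPdiag {Gen : C} {X Y : GPObj C Gen} (f : X ⟶ Y) (u : X.base ⟶ Y.base) : Prop :=
  X.ι ≫ GPHom.tot f = u ≫ Y.ι

/-- A `GP(C)`-endomorphism which is a phase in `C`. -/
def GPisPhase {Gen : C} {X : GPObj C Gen} (U : X ⟶ X) : Prop :=
  X.ι ≫ GPHom.tot U = X.ι

/-!
Phases are isomorphisms, so a diagonal morphism between phased coproducts whose components are
invertible is invertible. Hence phased coproducts can be rebracketed: `(A +̇ B) +̇ I` is also a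
phased coproduct `(A +̇ I) +̇ B`, and `(A +̇ I) +̇ (B +̇ I)` is one of `A +̇ B` and `I +̇ I`. The
first makes `κ̂_A` a coprojection, hence monic. A copairing of `f : Â → Ŵ` and `g : B̂ → Ŵ` in `C`
only restricts to `f` and `g` up to phases of `Â` and `B̂`; transitivity moves these phases to
the target, where they can be absorbed. Two copairings, precomposed with the epimorphism
`Â +̇ B̂ → (A +̇ B) +̇ I`, differ by a phase `Θ` of `Â +̇ B̂`. Along the diagonal monomorphism
`I +̇ I → Â +̇ B̂` it becomes a phase of `I +̇ I` that is invisible after a codiagonal, so it is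
trivial because `I` is a phase generator, and then so is `Θ`.

For `0̂ = 0 +̇ I`, a retraction `d` of `κ_I` makes `d ≫ κ_I` a phase, so `κ_I` is epi and a
morphism of `GP(C)` out of `0̂` is determined by preserving `κ_I`.
-/

open Category

theorem isIso_of_isIso_comp_of_isIso_comp {X Y : C} (f : X ⟶ Y) (g : Y ⟶ X)
    [IsIso (f ≫ g)] [IsIso (g ≫ f)] : IsIso f := by
  have : Mono f := mono_of_mono f g
  have : IsSplitEpi f := ⟨⟨⟨inv (g ≫ f) ≫ g, by simp⟩⟩⟩
  exact isIso_of_mono_of_isSplitEpi f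

namespace IsPhasedCoproduct₂

variable {A B P : C} {κA : A ⟶ P} {κB : B ⟶ P}

theorem swap (hP : IsPhasedCoproduct₂ A B P κA κB) : IsPhasedCoproduct₂ B A P κB κA where
  lift f g := (hP.lift g f).imp fun _ h => h.symm
  phase h h' eB eA := (hP.phase h h' eA eB).imp fun _ ⟨⟨hA, hB⟩, hU⟩ => ⟨⟨hB, hA⟩, hU⟩

theorem isIso_of_phase (hP : IsPhasedCoproduct₂ A B P κA κB) {U : P ⟶ P}
    (hA : κA ≫ U = κA) (hB : κB ≫ U = κB) : IsIso U := by
  obtain ⟨W, ⟨hWA, hWB⟩, hWU⟩ := hP.phase U (𝟙 P) (by rw [hA, comp_id]) (by rw [hB, comp_id])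
  obtain ⟨W', -, hW'W⟩ := hP.phase W (𝟙 P) (by rw [hWA, comp_id]) (by rw [hWB, comp_id])
  have hW' : W' = U := by rw [← comp_id W', hWU, ← assoc, ← hW'W, id_comp]
  exact ⟨W, by rw [← hW', ← hW'W], hWU.symm⟩

theorem isIso_of_diagonal (hP : IsPhasedCoproduct₂ A B P κA κB)
    {A' B' Q : C} {κA' : A' ⟶ Q} {κB' : B' ⟶ Q} (hQ : IsPhasedCoproduct₂ A' B' Q κA' κB')
    {f : P ⟶ Q} {α : A ⟶ A'} {β : B ⟶ B'} [IsIso α] [IsIso β]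
    (hA : κA ≫ f = α ≫ κA') (hB : κB ≫ f = β ≫ κB') : IsIso f := by
  obtain ⟨g, hgA, hgB⟩ := hQ.lift (inv α ≫ κA) (inv β ≫ κB)
  have : IsIso (f ≫ g) :=
    hP.isIso_of_phase (by simp [reassoc_of% hA, hgA]) (by simp [reassoc_of% hB, hgB])
  have : IsIso (g ≫ f) :=
    hQ.isIso_of_phase (by simp [reassoc_of% hgA, hA]) (by simp [reassoc_of% hgB, hB])
  exact isIso_of_isIso_comp_of_isIso_comp f g

theorem of_isIso (hP : IsPhasedCoproduct₂ A B P κA κB) {Q : C} (ω : P ⟶ Q) [IsIso ω] :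
    IsPhasedCoproduct₂ A B Q (κA ≫ ω) (κB ≫ ω) where
  lift f g := by
    obtain ⟨h, hA, hB⟩ := hP.lift f g
    exact ⟨inv ω ≫ h, by simpa using hA, by simpa using hB⟩
  phase h h' eA eB := by
    obtain ⟨U, ⟨hUA, hUB⟩, hU⟩ :=
      hP.phase (ω ≫ h) (ω ≫ h') (by simpa using eA) (by simpa using eB)
    refine ⟨inv ω ≫ U ≫ ω, ⟨by simp [reassoc_of% hUA], by simp [reassoc_of% hUB]⟩, ?_⟩
    rw [← cancel_epi ω]
    simp [hU]

theorem exists_codiagonal_comp {J : C} {k₁ k₂ : A ⟶ J} (hJ : IsPhasedCoproduct₂ A A J k₁ k₂)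
    {E : C} (h : J ⟶ E) (e : A ⟶ E) (h₁ : k₁ ≫ h = e) (h₂ : k₂ ≫ h = e) :
    ∃ d : J ⟶ A, k₁ ≫ d = 𝟙 A ∧ k₂ ≫ d = 𝟙 A ∧ h = d ≫ e := by
  obtain ⟨codiag, hc₁, hc₂⟩ := hJ.lift (𝟙 A) (𝟙 A)
  obtain ⟨φ, ⟨hφ₁, hφ₂⟩, hφ⟩ :=
    hJ.phase (codiag ≫ e) h (by simp [reassoc_of% hc₁, h₁]) (by simp [reassoc_of% hc₂, h₂])
  exact ⟨φ ≫ codiag, by rw [reassoc_of% hφ₁, hc₁], by rw [reassoc_of% hφ₂, hc₂], by rw [hφ, assoc]⟩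

theorem rebracket (hcop : HasPhasedCoproducts₂ C) (hP : IsPhasedCoproduct₂ A B P κA κB)
    {E T X : C} {κP : P ⟶ T} {κE : E ⟶ T} (hT : IsPhasedCoproduct₂ P E T κP κE)
    {ιA : A ⟶ X} {ιE : E ⟶ X} (hX : IsPhasedCoproduct₂ A E X ιA ιE)
    {a : X ⟶ T} (ha : ιA ≫ a = κA ≫ κP) (haE : ιE ≫ a = κE) :
    IsPhasedCoproduct₂ X B T a (κB ≫ κP) := by
  obtain ⟨R, r₁, r₂, hR⟩ := hcop X B
  obtain ⟨ω, hω₁, hω₂⟩ := hR.lift a (κB ≫ κP)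
  obtain ⟨c, hcA, hcB⟩ := hP.lift (ιA ≫ r₁) r₂
  obtain ⟨χ, hχP, hχE⟩ := hT.lift c (ιE ≫ r₁)
  obtain ⟨α, ⟨hαA, hαE⟩, hα⟩ :=
    hX.phase r₁ (a ≫ χ) (by simp [reassoc_of% ha, hχP, hcA]) (by simp [reassoc_of% haE, hχE])
  obtain ⟨u, ⟨huA, huB⟩, hu⟩ :=
    hP.phase κP (c ≫ ω) (by simp [reassoc_of% hcA, hω₁, ha]) (by simp [reassoc_of% hcB, hω₂])
  have := hX.isIso_of_phase hαA hαE
  have := hP.isIso_of_phase huA huB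
  have : IsIso (ω ≫ χ) := hR.isIso_of_diagonal hR (α := α) (β := 𝟙 B)
    (by simp [reassoc_of% hω₁, hα]) (by simp [reassoc_of% hω₂, hχP, hcB])
  have : IsIso (χ ≫ ω) := hT.isIso_of_diagonal hT (α := u) (β := 𝟙 E)
    (by simp [reassoc_of% hχP, hu]) (by simp [reassoc_of% hχE, hω₁, haE])
  have := isIso_of_isIso_comp_of_isIso_comp ω χ
  simpa only [hω₁, hω₂] using hR.of_isIso ω

theorem interchange (hcop : HasPhasedCoproducts₂ C) (hP : IsPhasedCoproduct₂ A B P κA κB)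
    {E F X Y : C} {ιA : A ⟶ X} {ιE : E ⟶ X} (hX : IsPhasedCoproduct₂ A E X ιA ιE)
    {ιB : B ⟶ Y} {ιF : F ⟶ Y} (hY : IsPhasedCoproduct₂ B F Y ιB ιF)
    {J : C} {k₁ : E ⟶ J} {k₂ : F ⟶ J} (hJ : IsPhasedCoproduct₂ E F J k₁ k₂)
    {Q : C} {j₁ : X ⟶ Q} {j₂ : Y ⟶ Q} (hQ : IsPhasedCoproduct₂ X Y Q j₁ j₂)
    {s : P ⟶ Q} (hsA : κA ≫ s = ιA ≫ j₁) (hsB : κB ≫ s = ιB ≫ j₂)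
    {m : J ⟶ Q} (hm₁ : k₁ ≫ m = ιE ≫ j₁) (hm₂ : k₂ ≫ m = ιF ≫ j₂) :
    IsPhasedCoproduct₂ P J Q s m := by
  obtain ⟨R, r₁, r₂, hR⟩ := hcop P J
  obtain ⟨ω, hω₁, hω₂⟩ := hR.lift s m
  obtain ⟨cX, hcA, hcE⟩ := hX.lift (κA ≫ r₁) (k₁ ≫ r₂)
  obtain ⟨cY, hcB, hcF⟩ := hY.lift (κB ≫ r₁) (k₂ ≫ r₂)
  obtain ⟨χ, hχ₁, hχ₂⟩ := hQ.lift cX cY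
  obtain ⟨α, ⟨hαA, hαB⟩, hα⟩ :=
    hP.phase r₁ (s ≫ χ) (by simp [reassoc_of% hsA, hχ₁, hcA]) (by simp [reassoc_of% hsB, hχ₂, hcB])
  obtain ⟨β, ⟨hβE, hβF⟩, hβ⟩ :=
    hJ.phase r₂ (m ≫ χ) (by simp [reassoc_of% hm₁, hχ₁, hcE]) (by simp [reassoc_of% hm₂, hχ₂, hcF])
  obtain ⟨γ, ⟨hγA, hγE⟩, hγ⟩ :=
    hX.phase j₁ (cX ≫ ω) (by simp [reassoc_of% hcA, hω₁, hsA]) (by simp [reassoc_of% hcE, hω₂, hm₁])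
  obtain ⟨δ, ⟨hδB, hδF⟩, hδ⟩ :=
    hY.phase j₂ (cY ≫ ω) (by simp [reassoc_of% hcB, hω₁, hsB]) (by simp [reassoc_of% hcF, hω₂, hm₂])
  have := hP.isIso_of_phase hαA hαB
  have := hJ.isIso_of_phase hβE hβF
  have := hX.isIso_of_phase hγA hγE
  have := hY.isIso_of_phase hδB hδF
  have : IsIso (ω ≫ χ) := hR.isIso_of_diagonal hR (α := α) (β := β)
    (by simp [reassoc_of% hω₁, hα]) (by simp [reassoc_of% hω₂, hβ])
  have : IsIso (χ ≫ ω) := hQ.isIso_of_diagonal hQ (α := γ) (β := δ)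
    (by simp [reassoc_of% hχ₁, hγ]) (by simp [reassoc_of% hχ₂, hδ])
  have := isIso_of_isIso_comp_of_isIso_comp ω χ
  simpa only [hω₁, hω₂] using hR.of_isIso ω

end IsPhasedCoproduct₂

theorem PhasesTransitive.exists_comp_eq (htrans : PhasesTransitive C)
    {A E X : C} {ι₁ : A ⟶ X} {ι₂ : E ⟶ X} (hX : IsPhasedCoproduct₂ A E X ι₁ ι₂)
    {A' B' T : C} {c : A' ⟶ T} {b : B' ⟶ T} (hT : IsPhasedCoproduct₂ A' B' T c b)
    {a : X ⟶ T} (ha₁ : ∃ g, ι₁ ≫ a = g ≫ c) (ha₂ : ∃ h, ι₂ ≫ a = h ≫ b)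
    {D : C} (H₀ : T ⟶ D) (F : X ⟶ D)
    (h₁ : ι₁ ≫ a ≫ H₀ = ι₁ ≫ F) (h₂ : ι₂ ≫ a ≫ H₀ = ι₂ ≫ F) :
    ∃ H : T ⟶ D, a ≫ H = F ∧ b ≫ H = b ≫ H₀ := by
  obtain ⟨ρ, ⟨hρ₁, hρ₂⟩, hρ⟩ := hX.phase (a ≫ H₀) F h₁ h₂
  obtain ⟨Γ, ⟨-, hΓ⟩, hρΓ⟩ := htrans hX hT a ha₁ ha₂ ρ hρ₁ hρ₂
  exact ⟨Γ ≫ H₀, by rw [hρ, ← reassoc_of% hρΓ], by rw [reassoc_of% hΓ]⟩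

theorem IsPhaseGenerator.phase_eq_id {Gen : C} (hgen : IsPhaseGenerator Gen)
    {J : C} {k₁ k₂ : Gen ⟶ J} (hJ : IsPhasedCoproduct₂ Gen Gen J k₁ k₂)
    {A B Q : C} {j₁ : A ⟶ Q} {j₂ : B ⟶ Q} (hQ : IsPhasedCoproduct₂ A B Q j₁ j₂)
    {m : J ⟶ Q} [Mono m] (hm₁ : ∃ g, k₁ ≫ m = g ≫ j₁) (hm₂ : ∃ h, k₂ ≫ m = h ≫ j₂)
    {d : J ⟶ Gen} (hd₁ : k₁ ≫ d = 𝟙 Gen) (hd₂ : k₂ ≫ d = 𝟙 Gen)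
    {E : C} {g : Q ⟶ E} {w : Gen ⟶ E} [Mono w] (hg : m ≫ g = d ≫ w)
    {Θ : Q ⟶ Q} (hΘ₁ : j₁ ≫ Θ = j₁) (hΘ₂ : j₂ ≫ Θ = j₂) (hΘg : m ≫ Θ ≫ g = d ≫ w) :
    Θ = 𝟙 Q := by
  obtain ⟨g₁, hg₁⟩ := hm₁
  obtain ⟨g₂, hg₂⟩ := hm₂
  obtain ⟨θ, hθJ, hθ⟩ :=
    hJ.phase m (m ≫ Θ) (by rw [reassoc_of% hg₁, hΘ₁, hg₁]) (by rw [reassoc_of% hg₂, hΘ₂, hg₂])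
  have hθd : θ ≫ d = 𝟙 J ≫ d := by
    rw [id_comp, ← cancel_mono w, assoc, ← hg, ← reassoc_of% hθ, hΘg, hg]
  have hθ_id : θ = 𝟙 J :=
    hgen.phaseMonic hJ d hd₁ hd₂ θ (𝟙 J) hθJ ⟨comp_id _, comp_id _⟩ hθd
  exact hgen.phaseEpic hJ hQ m inferInstance ⟨g₁, hg₁⟩ ⟨g₂, hg₂⟩ Θ (𝟙 Q) ⟨hΘ₁, hΘ₂⟩
    ⟨comp_id _, comp_id _⟩ (by rw [hθ, hθ_id, id_comp, comp_id])

theorem GPObj.nonempty_isInitial {Gen : C} (Z : GPObj C Gen) (hZ : IsInitial Z.base) :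
    Nonempty (IsInitial Z) := by
  obtain ⟨d, -, hdI⟩ := Z.isPC.lift (hZ.to Gen) (𝟙 Gen)
  have : IsIso (d ≫ Z.ιI) :=
    Z.isPC.isIso_of_phase (hZ.hom_ext _ _) (by rw [reassoc_of% hdI])
  have : Epi Z.ιI := epi_of_epi d Z.ιI
  have hex (W : GPObj C Gen) : Nonempty (Z ⟶ W) :=
    let ⟨h, hι, hιI⟩ := Z.isPC.lift (hZ.to W.base ≫ W.ι) W.ιI
    ⟨⟨h, hιI, hZ.to W.base, hι⟩⟩
  exact ⟨IsInitial.ofUniqueHom (fun W => (hex W).some) fun W m =>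
    GPHom.ext ((cancel_epi Z.ιI).1 (m.unit.trans (hex W).some.unit.symm))⟩

namespace GPdiag

variable {Gen : C} {X Y Z : GPObj C Gen} {κA : X.base ⟶ Z.base} {κB : Y.base ⟶ Z.base}
  {iA : X ⟶ Z} {iB : Y ⟶ Z}

theorem w (hA : GPdiag iA κA) : X.ι ≫ iA.f = κA ≫ Z.ι := hA

theorem isPhasedCoproduct₂ (hcop : HasPhasedCoproducts₂ C)
    (hP : IsPhasedCoproduct₂ X.base Y.base Z.base κA κB) (hA : GPdiag iA κA) :
    IsPhasedCoproduct₂ X.tot Y.base Z.tot iA.f (κB ≫ Z.ι) :=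
  hP.rebracket hcop Z.isPC X.isPC hA iA.unit

theorem mono (hcop : HasPhasedCoproducts₂ C) (hmono : MonicPhasedCoproducts C)
    (hP : IsPhasedCoproduct₂ X.base Y.base Z.base κA κB) (hA : GPdiag iA κA) : Mono iA :=
  have := (hmono (hA.isPhasedCoproduct₂ hcop hP)).1
  ⟨fun _ _ huv => GPHom.ext ((cancel_mono iA.f).1 (congrArg GPHom.f huv))⟩

theorem epi_desc (hP : IsPhasedCoproduct₂ X.base Y.base Z.base κA κB)
    (hA : GPdiag iA κA) (hB : GPdiag iB κB)
    {Q : C} {j₁ : X.tot ⟶ Q} {j₂ : Y.tot ⟶ Q}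
    {M : Q ⟶ Z.tot} (hM₁ : j₁ ≫ M = iA.f) (hM₂ : j₂ ≫ M = iB.f) : Epi M := by
  obtain ⟨sP, hsA, hsB⟩ := hP.lift (X.ι ≫ j₁) (Y.ι ≫ j₂)
  obtain ⟨s, hsP, hsI⟩ := Z.isPC.lift sP (X.ιI ≫ j₁)
  obtain ⟨u, ⟨huA, huB⟩, hu⟩ := hP.phase Z.ι (sP ≫ M)
    (by rw [reassoc_of% hsA, hM₁]; exact hA.w.symm) (by rw [reassoc_of% hsB, hM₂]; exact hB.w.symm)
  have := hP.isIso_of_phase huA huB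
  have : IsIso (s ≫ M) := Z.isPC.isIso_of_diagonal Z.isPC (α := u) (β := 𝟙 Gen)
    (by simp [reassoc_of% hsP, hu]) (by simp [reassoc_of% hsI, hM₁, iA.unit])
  exact epi_of_epi s M

theorem hom_ext (hcop : HasPhasedCoproducts₂ C) (hmono : MonicPhasedCoproducts C)
    (hgen : IsPhaseGenerator Gen) (hP : IsPhasedCoproduct₂ X.base Y.base Z.base κA κB)
    (hA : GPdiag iA κA) (hB : GPdiag iB κB) {W : GPObj C Gen} {H₁ H₂ : Z ⟶ W}
    (hH₁ : iA ≫ H₁ = iA ≫ H₂) (hH₂ : iB ≫ H₁ = iB ≫ H₂) : H₁ = H₂ := by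
  obtain ⟨Q, j₁, j₂, hQ⟩ := hcop X.tot Y.tot
  obtain ⟨J, k₁, k₂, hJ⟩ := hcop Gen Gen
  obtain ⟨M, hM₁, hM₂⟩ := hQ.lift iA.f iB.f
  obtain ⟨m, hm₁, hm₂⟩ := hJ.lift (X.ιI ≫ j₁) (Y.ιI ≫ j₂)
  obtain ⟨s, hsA, hsB⟩ := hP.lift (X.ι ≫ j₁) (Y.ι ≫ j₂)
  have : Epi M := epi_desc hP hA hB hM₁ hM₂
  have : Mono m := (hmono (hP.interchange hcop X.isPC Y.isPC hJ hQ hsA hsB hm₁ hm₂)).2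
  have : Mono W.ιI := (hmono W.isPC).2
  obtain ⟨d, hd₁, hd₂, hd⟩ := hJ.exists_codiagonal_comp (m ≫ M) Z.ιI
    (by simp [reassoc_of% hm₁, hM₁, iA.unit]) (by simp [reassoc_of% hm₂, hM₂, iB.unit])
  obtain ⟨Θ, ⟨hΘ₁, hΘ₂⟩, hΘ⟩ := hQ.phase (M ≫ H₁.f) (M ≫ H₂.f)
    (by rw [reassoc_of% hM₁, reassoc_of% hM₁]; exact congrArg GPHom.f hH₁)
    (by rw [reassoc_of% hM₂, reassoc_of% hM₂]; exact congrArg GPHom.f hH₂)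
  have hΘ_id : Θ = 𝟙 Q := hgen.phase_eq_id hJ hQ ⟨X.ιI, hm₁⟩ ⟨Y.ιI, hm₂⟩ hd₁ hd₂
    (by rw [reassoc_of% hd, H₁.unit]) hΘ₁ hΘ₂ (by rw [← hΘ, reassoc_of% hd, H₂.unit])
  exact GPHom.ext ((cancel_epi M).1 (by rw [hΘ, hΘ_id, id_comp]))

theorem exists_desc (hcop : HasPhasedCoproducts₂ C) (htrans : PhasesTransitive C)
    (hP : IsPhasedCoproduct₂ X.base Y.base Z.base κA κB)
    (hA : GPdiag iA κA) (hB : GPdiag iB κB) {W : GPObj C Gen} (f : X ⟶ W) (g : Y ⟶ W) :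
    ∃ h : Z ⟶ W, iA ≫ h = f ∧ iB ≫ h = g := by
  obtain ⟨f₀, hf₀⟩ := f.diag
  obtain ⟨g₀, hg₀⟩ := g.diag
  obtain ⟨t, htA, htB⟩ := hP.lift f₀ g₀
  obtain ⟨H₀, hH₀, hH₀I⟩ := Z.isPC.lift (t ≫ W.ι) W.ιI
  have hAB : X.ιI ≫ iA.f = Y.ιI ≫ iB.f := iA.unit.trans iB.unit.symm
  obtain ⟨H₁, hH₁A, hH₁B⟩ := htrans.exists_comp_eq X.isPC (hB.isPhasedCoproduct₂ hcop hP.swap).swap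
    ⟨𝟙 _, by rw [id_comp, hA.w]⟩ ⟨Y.ιI, hAB⟩ H₀ f.f
    (by rw [reassoc_of% hA.w, hH₀, reassoc_of% htA, hf₀])
    (by rw [reassoc_of% iA.unit, hH₀I, f.unit])
  obtain ⟨H, hHB, hHA⟩ := htrans.exists_comp_eq Y.isPC (hA.isPhasedCoproduct₂ hcop hP).swap
    ⟨𝟙 _, by rw [id_comp, hB.w]⟩ ⟨X.ιI, hAB.symm⟩ H₁ g.f
    (by rw [hH₁B, reassoc_of% hB.w, hH₀, reassoc_of% htB, hg₀])
    (by rw [hH₁B, reassoc_of% iB.unit, hH₀I, g.unit])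
  have hHf : iA.f ≫ H = f.f := hHA.trans hH₁A
  obtain ⟨U, -, hU⟩ := hP.phase (t ≫ W.ι) (Z.ι ≫ H)
    (by rw [reassoc_of% htA, ← hf₀, ← hHf, ← reassoc_of% hA.w])
    (by rw [reassoc_of% htB, ← hg₀, ← hHB, ← reassoc_of% hB.w])
  refine ⟨⟨H, ?_, U ≫ t, by rw [hU, assoc]⟩, GPHom.ext hHf, GPHom.ext hHB⟩
  rw [← iA.unit, assoc, hHf, f.unit]

end GPdiag

theorem stmt_8_general (Gen : C)
    (hcop : HasPhasedCoproducts₂ C)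
    (hmono : MonicPhasedCoproducts C) (htrans : PhasesTransitive C)
    (hgen : IsPhaseGenerator Gen) :
    (∀ Zh : GPObj C Gen, IsInitial Zh.base → Nonempty (IsInitial Zh)) ∧
    (∀ (X Y : GPObj C Gen) (P : C) (κA : X.base ⟶ P) (κB : Y.base ⟶ P),
      IsPhasedCoproduct₂ X.base Y.base P κA κB →
      ∀ (T : C) (κP : P ⟶ T) (κI : Gen ⟶ T) (hT : IsPhasedCoproduct₂ P Gen T κP κI),
        (∃ iA : X ⟶ (⟨P, T, κP, κI, hT⟩ : GPObj C Gen), GPdiag iA κA) ∧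
        (∃ iB : Y ⟶ (⟨P, T, κP, κI, hT⟩ : GPObj C Gen), GPdiag iB κB) ∧
        (∀ (iA : X ⟶ (⟨P, T, κP, κI, hT⟩ : GPObj C Gen))
           (iB : Y ⟶ (⟨P, T, κP, κI, hT⟩ : GPObj C Gen)),
          GPdiag iA κA → GPdiag iB κB →
          Mono iA ∧ Mono iB ∧
          ∀ (W : GPObj C Gen) (f : X ⟶ W) (g : Y ⟶ W),
            ∃! h : (⟨P, T, κP, κI, hT⟩ : GPObj C Gen) ⟶ W, iA ≫ h = f ∧ iB ≫ h = g)) := by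
  refine ⟨fun Zh hZ => Zh.nonempty_isInitial hZ, fun X Y P κA κB hP T κP κI hT => ?_⟩
  obtain ⟨a, ha, haI⟩ := X.isPC.lift (κA ≫ κP) κI
  obtain ⟨b, hb, hbI⟩ := Y.isPC.lift (κB ≫ κP) κI
  refine ⟨⟨⟨a, haI, κA, ha⟩, ha⟩, ⟨⟨b, hbI, κB, hb⟩, hb⟩, fun iA iB hA hB =>
    ⟨hA.mono hcop hmono hP, hB.mono hcop hmono hP.swap, fun W f g => ?_⟩⟩
  obtain ⟨h, hf, hg⟩ := hA.exists_desc hcop htrans hP hB f g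
  exact ⟨h, ⟨hf, hg⟩, fun h' ⟨hf', hg'⟩ =>
    hA.hom_ext hcop hmono hgen hP hB (hf'.trans hf.symm) (hg'.trans hg.symm)⟩

/-- if `C` has finite monic phased coproducts with transitive phases and a
phase generator `Gen`, then `GP(C)` has finite coproducts with monic coprojections.
Concretely, any `0 +̇ Gen` with `0` initial is initial in `GP(C)`; and for objects
`Â = A +̇ Gen`, `B̂ = B +̇ Gen` and a phased coproduct `A +̇ B`, any `(A +̇ B) +̇ Gen`
together with the `GP(C)`-morphisms `κ̂A`, `κ̂B` whose diagonal components are the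
coprojections of `A +̇ B` forms a (monic) coproduct of `Â` and `B̂` in `GP(C)`. -/
theorem stmt_8 (Gen : C)
    (hcop : HasPhasedCoproducts₂ C) (hinit : HasInitial C)
    (hmono : MonicPhasedCoproducts C) (htrans : PhasesTransitive C)
    (hgen : IsPhaseGenerator Gen) :
    (∀ Zh : GPObj C Gen, IsInitial Zh.base → Nonempty (IsInitial Zh)) ∧
    (∀ (X Y : GPObj C Gen) (P : C) (κA : X.base ⟶ P) (κB : Y.base ⟶ P),
      IsPhasedCoproduct₂ X.base Y.base P κA κB →
      ∀ (T : C) (κP : P ⟶ T) (κI : Gen ⟶ T) (hT : IsPhasedCoproduct₂ P Gen T κP κI),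
        (∃ iA : X ⟶ (⟨P, T, κP, κI, hT⟩ : GPObj C Gen), GPdiag iA κA) ∧
        (∃ iB : Y ⟶ (⟨P, T, κP, κI, hT⟩ : GPObj C Gen), GPdiag iB κB) ∧
        (∀ (iA : X ⟶ (⟨P, T, κP, κI, hT⟩ : GPObj C Gen))
           (iB : Y ⟶ (⟨P, T, κP, κI, hT⟩ : GPObj C Gen)),
          GPdiag iA κA → GPdiag iB κB →
          Mono iA ∧ Mono iB ∧
          ∀ (W : GPObj C Gen) (f : X ⟶ W) (g : Y ⟶ W),
            ∃! h : (⟨P, T, κP, κI, hT⟩ : GPObj C Gen) ⟶ W, iA ≫ h = f ∧ iB ≫ h = g)) :=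
  stmt_8_general Gen hcop hmono htrans hgen
end

section
/- Let C be a monoidal category with distributive finite coproducts and a choice of global phases P. Then the tensor product of C descends to the quotient C_P, making C_P a monoidal category, and C_P has distributive finite phased coproducts with transitive phases (the images of coproducts of C being phased coproducts of C_P). -/
open CategoryTheory CategoryTheory.Limits

universe v u

variable {C : Type u} [Category.{v} C]

/-- Phased coproduct of a family of objects. -/
structure IsPhasedCoproduct {ι : Type*} (A : ι → C) (P : C) (κ : ∀ i, A i ⟶ P) : Prop where
  lift : ∀ {D : C} (f : ∀ i, A i ⟶ D), ∃ h : P ⟶ D, ∀ i, κ i ≫ h = f i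
  phase : ∀ {D : C} (h h' : P ⟶ D), (∀ i, κ i ≫ h = κ i ≫ h') →
    ∃ U : P ⟶ P, (∀ i, κ i ≫ U = κ i) ∧ h' = U ≫ h

/-- Binary (actual) coproduct, phrased elementarily. -/
def IsCoproduct₂ (A B P : C) (κA : A ⟶ P) (κB : B ⟶ P) : Prop :=
  ∀ {D : C} (f : A ⟶ D) (g : B ⟶ D), ∃! h : P ⟶ D, κA ≫ h = f ∧ κB ≫ h = g

/-- Phased initial object. -/
structure IsPhasedInitial (Z : C) : Prop where
  exists_hom : ∀ A : C, Nonempty (Z ⟶ A)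
  phase : ∀ {A : C} (a b : Z ⟶ A), ∃ U : Z ⟶ Z, b = U ≫ a

open MonoidalCategory

section Monoidal

variable {C : Type u} [Category.{v} C] [MonoidalCategory C]

/-- Left action of a scalar on a morphism: `s·f`. -/
def lact (s : 𝟙_ C ⟶ 𝟙_ C) {A B : C} (f : A ⟶ B) : A ⟶ B :=
  (λ_ A).inv ≫ (s ⊗ₘ f) ≫ (λ_ B).hom

/-- Right action of a scalar on a morphism: `f·s`. -/
def ract (s : 𝟙_ C ⟶ 𝟙_ C) {A B : C} (f : A ⟶ B) : A ⟶ B :=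
  (ρ_ A).inv ≫ (f ⊗ₘ s) ≫ (ρ_ B).hom

/-- A scalar is central when its left and right actions agree on every morphism. -/
def Central (s : 𝟙_ C ⟶ 𝟙_ C) : Prop :=
  ∀ {A B : C} (f : A ⟶ B), lact s f = ract s f

/-- A choice of global phases: a set of invertible central scalars closed under
composition and inverses (in particular a group of scalars). -/
structure IsGlobalPhases (P : Set (𝟙_ C ⟶ 𝟙_ C)) : Prop where
  central : ∀ u ∈ P, Central u
  id_mem : 𝟙 (𝟙_ C) ∈ P
  comp_mem : ∀ u ∈ P, ∀ v ∈ P, u ≫ v ∈ P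
  inv_mem : ∀ u ∈ P, ∃ v ∈ P, u ≫ v = 𝟙 (𝟙_ C) ∧ v ≫ u = 𝟙 (𝟙_ C)

/-- The congruence induced by a choice of global phases: `f ∼ g` iff `f = u·g`. -/
def gpRel (P : Set (𝟙_ C ⟶ 𝟙_ C)) : HomRel C :=
  fun {_ _} f g => ∃ u ∈ P, f = lact u g

/-- Distributivity of binary phased coproducts in a monoidal category: the functors
`A ⊗ (−)` and `(−) ⊗ A` strongly preserve phased coproducts. -/
def DistribPhasedCoproducts (C : Type u) [Category.{v} C] [MonoidalCategory C] : Prop :=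
  ∀ (A : C) {B₁ B₂ P : C} {κ₁ : B₁ ⟶ P} {κ₂ : B₂ ⟶ P},
    IsPhasedCoproduct₂ B₁ B₂ P κ₁ κ₂ →
    (IsPhasedCoproduct₂ (A ⊗ B₁) (A ⊗ B₂) (A ⊗ P) (A ◁ κ₁) (A ◁ κ₂) ∧
      ∀ W : A ⊗ P ⟶ A ⊗ P, (A ◁ κ₁) ≫ W = A ◁ κ₁ → (A ◁ κ₂) ≫ W = A ◁ κ₂ →
        ∃ U : P ⟶ P, (κ₁ ≫ U = κ₁ ∧ κ₂ ≫ U = κ₂) ∧ W = A ◁ U) ∧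
    (IsPhasedCoproduct₂ (B₁ ⊗ A) (B₂ ⊗ A) (P ⊗ A) (κ₁ ▷ A) (κ₂ ▷ A) ∧
      ∀ W : P ⊗ A ⟶ P ⊗ A, (κ₁ ▷ A) ≫ W = κ₁ ▷ A → (κ₂ ▷ A) ≫ W = κ₂ ▷ A →
        ∃ U : P ⟶ P, (κ₁ ≫ U = κ₁ ∧ κ₂ ≫ U = κ₂) ∧ W = U ▷ A)

/-- Distributivity of binary (actual) coproducts in a monoidal category. -/
def DistribCoproducts (C : Type u) [Category.{v} C] [MonoidalCategory C] : Prop :=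
  ∀ (A : C) {B₁ B₂ P : C} {κ₁ : B₁ ⟶ P} {κ₂ : B₂ ⟶ P},
    IsCoproduct₂ B₁ B₂ P κ₁ κ₂ →
    IsCoproduct₂ (A ⊗ B₁) (A ⊗ B₂) (A ⊗ P) (A ◁ κ₁) (A ◁ κ₂) ∧
    IsCoproduct₂ (B₁ ⊗ A) (B₂ ⊗ A) (P ⊗ A) (κ₁ ▷ A) (κ₂ ▷ A)

/-- All coprojections of binary coproducts are monic. -/
def MonicCoproducts (C : Type u) [Category.{v} C] : Prop :=
  ∀ {A B P : C} {κA : A ⟶ P} {κB : B ⟶ P}, IsCoproduct₂ A B P κA κB → Mono κA ∧ Mono κB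

end Monoidal

variable [MonoidalCategory C]

/-- The compatibilities expressing that a monoidal structure on the quotient `C_P` is
the one descended from `C` (the quotient functor is strict monoidal), together with
the phased-coproduct structure of the quotient. -/
structure QuotMonCompat (C : Type u) [Category.{v} C] [MonoidalCategory C]
    (P : Set (𝟙_ C ⟶ 𝟙_ C)) [M : MonoidalCategory (Quotient (gpRel P))] : Prop where
  hunit : 𝟙_ (Quotient (gpRel P)) = (Quotient.functor (gpRel P)).obj (𝟙_ C)
  hobj : ∀ X Y : C,
    (Quotient.functor (gpRel P)).obj X ⊗ (Quotient.functor (gpRel P)).obj Y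
      = (Quotient.functor (gpRel P)).obj (X ⊗ Y)
  htens : ∀ {X X' Y Y' : C} (f : X ⟶ X') (g : Y ⟶ Y'),
    (Quotient.functor (gpRel P)).map f ⊗ₘ (Quotient.functor (gpRel P)).map g
      = eqToHom (hobj X Y) ≫ (Quotient.functor (gpRel P)).map (f ⊗ₘ g) ≫
          eqToHom (hobj X' Y').symm
  hassoc : ∀ X Y Z : C,
    (α_ ((Quotient.functor (gpRel P)).obj X) ((Quotient.functor (gpRel P)).obj Y)
        ((Quotient.functor (gpRel P)).obj Z)).hom
      = eqToHom ((congrArg (· ⊗ (Quotient.functor (gpRel P)).obj Z) (hobj X Y)).trans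
            (hobj (X ⊗ Y) Z)) ≫
        (Quotient.functor (gpRel P)).map (α_ X Y Z).hom ≫
        eqToHom ((congrArg ((Quotient.functor (gpRel P)).obj X ⊗ ·) (hobj Y Z)).trans
            (hobj X (Y ⊗ Z))).symm
  hlam : ∀ X : C,
    (λ_ ((Quotient.functor (gpRel P)).obj X)).hom
      = eqToHom ((congrArg (· ⊗ (Quotient.functor (gpRel P)).obj X) hunit).trans
            (hobj (𝟙_ C) X)) ≫ (Quotient.functor (gpRel P)).map (λ_ X).hom
  hrho : ∀ X : C,
    (ρ_ ((Quotient.functor (gpRel P)).obj X)).hom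
      = eqToHom ((congrArg ((Quotient.functor (gpRel P)).obj X ⊗ ·) hunit).trans
            (hobj X (𝟙_ C))) ≫ (Quotient.functor (gpRel P)).map (ρ_ X).hom
  himg : ∀ {A B Q : C} {κA : A ⟶ Q} {κB : B ⟶ Q}, IsCoproduct₂ A B Q κA κB →
    IsPhasedCoproduct₂ ((Quotient.functor (gpRel P)).obj A)
      ((Quotient.functor (gpRel P)).obj B) ((Quotient.functor (gpRel P)).obj Q)
      ((Quotient.functor (gpRel P)).map κA) ((Quotient.functor (gpRel P)).map κB)
  hinitial : ∀ Z : C, IsInitial Z →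
    Nonempty (IsInitial ((Quotient.functor (gpRel P)).obj Z))
  hhas : HasPhasedCoproducts₂ (Quotient (gpRel P))
  hdistQ : DistribPhasedCoproducts (Quotient (gpRel P))
  htransQ : PhasesTransitive (Quotient (gpRel P))

/-!
Central scalars commute with tensoring, so `u·f ⊗ v·g = (v ≫ u)·(f ⊗ g)`: the congruence of
global phases is compatible with `⊗` and the monoidal structure of `C` descends strictly to `C_P`.

A coproduct `(Q, ι_A, ι_B)` of `C` becomes a phased coproduct of `C_P`: two maps out of `Q` that
agree on the coprojections up to phases `u, v ∈ P` differ by the endomorphism `[u·ι_A, v·ι_B]`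
of `Q`, and the images of these endomorphisms are exactly the phases of the image coproduct.
Phased coproducts are unique up to isomorphisms under the coprojections, so every phased coproduct
of `C_P` is of this form. Distributivity and transitivity of phases are invariant under such
isomorphisms, so they reduce to statements about the maps `[u·ι_A, v·ι_B]` in `C`, which follow
from the universal property of coproducts and their distributivity.
-/

@[simp]
theorem lact_id {A B : C} (f : A ⟶ B) : lact (𝟙 (𝟙_ C)) f = f := by
  simp [lact]

theorem comp_lact (s : 𝟙_ C ⟶ 𝟙_ C) {A B D : C} (f : A ⟶ B) (g : B ⟶ D) :
    f ≫ lact s g = lact s (f ≫ g) := by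
  simp [lact, tensorHom_def']

theorem lact_comp (s : 𝟙_ C ⟶ 𝟙_ C) {A B D : C} (f : A ⟶ B) (g : B ⟶ D) :
    lact s f ≫ g = lact s (f ≫ g) := by
  simp [lact, MonoidalCategory.tensorHom_def]

theorem lact_lact (s t : 𝟙_ C ⟶ 𝟙_ C) {A B : C} (f : A ⟶ B) :
    lact s (lact t f) = lact (t ≫ s) f := by
  simp [lact, tensorHom_def']

theorem lact_tensorHom (s : 𝟙_ C ⟶ 𝟙_ C) {A A' B B' : C} (f : A ⟶ A') (g : B ⟶ B') :
    lact s f ⊗ₘ g = lact s (f ⊗ₘ g) := by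
  simp [lact, tensorHom_def']

theorem tensorHom_ract (s : 𝟙_ C ⟶ 𝟙_ C) {A A' B B' : C} (f : A ⟶ A') (g : B ⟶ B') :
    f ⊗ₘ ract s g = ract s (f ⊗ₘ g) := by
  simp [ract, tensorHom_def']

theorem whiskerRight_lact (s : 𝟙_ C ⟶ 𝟙_ C) {B B' : C} (g : B ⟶ B') (A : C) :
    lact s g ▷ A = lact s (g ▷ A) := by
  simp only [← tensorHom_id, lact_tensorHom]

theorem Central.tensorHom_lact {s : 𝟙_ C ⟶ 𝟙_ C} (hs : Central s) {A A' B B' : C}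
    (f : A ⟶ A') (g : B ⟶ B') : f ⊗ₘ lact s g = lact s (f ⊗ₘ g) := by
  rw [hs, hs, tensorHom_ract]

theorem Central.whiskerLeft_lact {s : 𝟙_ C ⟶ 𝟙_ C} (hs : Central s) (A : C) {B B' : C}
    (g : B ⟶ B') : A ◁ lact s g = lact s (A ◁ g) := by
  simp only [← id_tensorHom, hs.tensorHom_lact]

def TensorCompatible (r : HomRel C) : Prop :=
  ∀ {X X' Y Y' : C} {f f' : X ⟶ X'} {g g' : Y ⟶ Y'}, r f f' → r g g' → r (f ⊗ₘ g) (f' ⊗ₘ g')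

namespace IsGlobalPhases

variable {P : Set (𝟙_ C ⟶ 𝟙_ C)}

theorem congruence (hP : IsGlobalPhases P) : Congruence (gpRel P) where
  equivalence :=
    { refl f := ⟨𝟙 _, hP.id_mem, (lact_id f).symm⟩
      symm := by
        rintro _ _ ⟨u, hu, rfl⟩
        obtain ⟨v, hv, huv, -⟩ := hP.inv_mem u hu
        exact ⟨v, hv, by rw [lact_lact, huv, lact_id]⟩
      trans := by
        rintro _ _ _ ⟨u, hu, rfl⟩ ⟨v, hv, rfl⟩
        exact ⟨v ≫ u, hP.comp_mem v hv u hu, lact_lact u v _⟩ }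
  comp_left f := by
    rintro _ _ ⟨u, hu, rfl⟩
    exact ⟨u, hu, comp_lact u f _⟩
  comp_right g := by
    rintro ⟨u, hu, rfl⟩
    exact ⟨u, hu, lact_comp u _ g⟩

theorem tensorCompatible (hP : IsGlobalPhases P) : TensorCompatible (gpRel P) := by
  rintro _ _ _ _ _ f _ g ⟨u, hu, rfl⟩ ⟨v, hv, rfl⟩
  exact ⟨v ≫ u, hP.comp_mem v hv u hu, by
    rw [lact_tensorHom, Central.tensorHom_lact (hP.central v hv), lact_lact]⟩

end IsGlobalPhases

namespace CategoryTheory.Quotient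

def isInitialFunctorObj {r : HomRel C} {Z : C} (hZ : IsInitial Z) : IsInitial ((functor r).obj Z) :=
  IsInitial.ofUniqueHom (fun Y => (functor r).map (hZ.to Y.as)) fun Y m => by
    obtain ⟨m, rfl⟩ := (functor r).map_surjective (Y := Y.as) m
    exact congrArg _ (hZ.hom_ext _ _)

variable {r : HomRel C} [Congruence r]

def tensorHom (hr : TensorCompatible r) {X₁ Y₁ X₂ Y₂ : Quotient r} (f : X₁ ⟶ Y₁) (g : X₂ ⟶ Y₂) :
    (⟨X₁.as ⊗ X₂.as⟩ : Quotient r) ⟶ ⟨Y₁.as ⊗ Y₂.as⟩ :=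
  Quot.map₂ (· ⊗ₘ ·)
    (fun f _ _ h => by
      rw [HomRel.compClosure_iff_self] at h ⊢
      exact hr (Congruence.equivalence.refl f) h)
    (fun _ _ g h => by
      rw [HomRel.compClosure_iff_self] at h ⊢
      exact hr h (Congruence.equivalence.refl g))
    f g

abbrev monoidalCategoryStruct (hr : TensorCompatible r) : MonoidalCategoryStruct (Quotient r) where
  tensorObj X Y := ⟨X.as ⊗ Y.as⟩
  tensorHom := tensorHom hr
  whiskerLeft X _ _ f := tensorHom hr (𝟙 X) f
  whiskerRight f Y := tensorHom hr f (𝟙 Y)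
  tensorUnit := ⟨𝟙_ C⟩
  associator X Y Z := (functor r).mapIso (α_ X.as Y.as Z.as)
  leftUnitor X := (functor r).mapIso (λ_ X.as)
  rightUnitor X := (functor r).mapIso (ρ_ X.as)

abbrev monoidalCategory (hr : TensorCompatible r) : MonoidalCategory (Quotient r) :=
  letI := monoidalCategoryStruct (r := r) hr
  .ofTensorHom
    (id_tensorHom_id := fun X₁ X₂ => congrArg (functor r).map (id_tensorHom_id X₁.as X₂.as))
    (id_tensorHom := fun _ _ _ _ => rfl)
    (tensorHom_id := fun _ _ => rfl)
    (tensorHom_comp_tensorHom := by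
      rintro _ _ _ _ _ _ ⟨f₁⟩ ⟨f₂⟩ ⟨g₁⟩ ⟨g₂⟩
      exact congrArg (functor r).map (tensorHom_comp_tensorHom f₁ f₂ g₁ g₂))
    (associator_naturality := by
      rintro _ _ _ _ _ _ ⟨f₁⟩ ⟨f₂⟩ ⟨f₃⟩
      exact congrArg (functor r).map (associator_naturality f₁ f₂ f₃))
    (leftUnitor_naturality := by
      rintro ⟨X⟩ ⟨Y⟩ ⟨f⟩
      exact congrArg (functor r).map
        (by simp : (𝟙 (𝟙_ C) ⊗ₘ f) ≫ (λ_ Y).hom = (λ_ X).hom ≫ f))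
    (rightUnitor_naturality := by
      rintro ⟨X⟩ ⟨Y⟩ ⟨f⟩
      exact congrArg (functor r).map
        (by simp : (f ⊗ₘ 𝟙 (𝟙_ C)) ≫ (ρ_ Y).hom = (ρ_ X).hom ≫ f))
    (pentagon := fun ⟨W⟩ ⟨X⟩ ⟨Y⟩ ⟨Z⟩ => congrArg (functor r).map
      (by simp : ((α_ W X Y).hom ⊗ₘ 𝟙 Z) ≫ (α_ W (X ⊗ Y) Z).hom ≫ (𝟙 W ⊗ₘ (α_ X Y Z).hom)
        = (α_ (W ⊗ X) Y Z).hom ≫ (α_ W X (Y ⊗ Z)).hom))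
    (triangle := fun ⟨X⟩ ⟨Y⟩ => congrArg (functor r).map
      (by simp : (α_ X (𝟙_ C) Y).hom ≫ (𝟙 X ⊗ₘ (λ_ Y).hom) = (ρ_ X).hom ⊗ₘ 𝟙 Y))

theorem functor_comp_tensorLeft (hr : TensorCompatible r) (A : C) :
    letI := monoidalCategory (r := r) hr
    functor r ⋙ tensorLeft ((functor r).obj A) = tensorLeft A ⋙ functor r :=
  Functor.ext (fun _ => rfl) fun _ _ f => by
    simp only [eqToHom_refl, Category.id_comp, Category.comp_id]
    exact congrArg (functor r).map (id_tensorHom A f)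

theorem functor_comp_tensorRight (hr : TensorCompatible r) (A : C) :
    letI := monoidalCategory (r := r) hr
    functor r ⋙ tensorRight ((functor r).obj A) = tensorRight A ⋙ functor r :=
  Functor.ext (fun _ => rfl) fun _ _ f => by
    simp only [eqToHom_refl, Category.id_comp, Category.comp_id]
    exact congrArg (functor r).map (tensorHom_id f A)

end CategoryTheory.Quotient

section PhasedCoproduct

variable {D : Type*} [Category D] {A B Q R : D} {κA : A ⟶ Q} {κB : B ⟶ Q}

def IsPhase (κA : A ⟶ Q) (κB : B ⟶ Q) (U : Q ⟶ Q) : Prop :=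
  κA ≫ U = κA ∧ κB ≫ U = κB

theorem IsPhasedCoproduct₂.isIso_of_isPhase (c : IsPhasedCoproduct₂ A B Q κA κB) {U : Q ⟶ Q}
    (hU : IsPhase κA κB U) : IsIso U := by
  obtain ⟨V, hV, hVU⟩ := c.phase U (𝟙 Q) (by simp [hU.1]) (by simp [hU.2])
  obtain ⟨W, -, hWV⟩ := c.phase V (𝟙 Q) (by simp [hV.1]) (by simp [hV.2])
  have hWU : W = U := by rw [← Category.comp_id W, hVU, ← Category.assoc, ← hWV, Category.id_comp]
  exact ⟨V, by rw [← hWU, hWV], hVU.symm⟩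

theorem IsPhasedCoproduct₂.exists_iso (c : IsPhasedCoproduct₂ A B Q κA κB)
    {κA' : A ⟶ R} {κB' : B ⟶ R} (c' : IsPhasedCoproduct₂ A B R κA' κB') :
    ∃ e : Q ≅ R, κA ≫ e.hom = κA' ∧ κB ≫ e.hom = κB' := by
  obtain ⟨φ, hφA, hφB⟩ := c.lift κA' κB'
  obtain ⟨ψ, hψA, hψB⟩ := c'.lift κA κB
  have : IsIso (φ ≫ ψ) := c.isIso_of_isPhase
    ⟨by simp [reassoc_of% hφA, hψA], by simp [reassoc_of% hφB, hψB]⟩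
  have : IsIso (ψ ≫ φ) := c'.isIso_of_isPhase
    ⟨by simp [reassoc_of% hψA, hφA], by simp [reassoc_of% hψB, hφB]⟩
  have : Epi φ := epi_of_epi ψ φ
  have : IsSplitMono φ := .mk' ⟨ψ ≫ inv (φ ≫ ψ), by rw [← Category.assoc, IsIso.hom_inv_id]⟩
  have : IsIso φ := isIso_of_epi_of_isSplitMono φ
  exact ⟨asIso φ, hφA, hφB⟩

theorem IsPhasedCoproduct₂.ofIso (c : IsPhasedCoproduct₂ A B Q κA κB) (e : Q ≅ R) :
    IsPhasedCoproduct₂ A B R (κA ≫ e.hom) (κB ≫ e.hom) where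
  lift f g := by
    obtain ⟨h, hA, hB⟩ := c.lift f g
    exact ⟨e.inv ≫ h, by simp [hA], by simp [hB]⟩
  phase h h' hA hB := by
    obtain ⟨U, ⟨hUA, hUB⟩, hU⟩ := c.phase (e.hom ≫ h) (e.hom ≫ h')
      (by simpa using hA) (by simpa using hB)
    refine ⟨e.inv ≫ U ≫ e.hom, ⟨by simp [reassoc_of% hUA], by simp [reassoc_of% hUB]⟩, ?_⟩
    simp [← hU]

variable {E : Type*} [Category E]

def StronglyPreservesPhasedCoproduct (F : D ⥤ E) (κA : A ⟶ Q) (κB : B ⟶ Q) : Prop :=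
  IsPhasedCoproduct₂ (F.obj A) (F.obj B) (F.obj Q) (F.map κA) (F.map κB) ∧
    ∀ W : F.obj Q ⟶ F.obj Q, F.map κA ≫ W = F.map κA → F.map κB ≫ W = F.map κB →
      ∃ U : Q ⟶ Q, IsPhase κA κB U ∧ W = F.map U

theorem StronglyPreservesPhasedCoproduct.ofIso {F : D ⥤ E}
    (hF : StronglyPreservesPhasedCoproduct F κA κB) (e : Q ≅ R) :
    StronglyPreservesPhasedCoproduct F (κA ≫ e.hom) (κB ≫ e.hom) := by
  refine ⟨by simpa using hF.1.ofIso (F.mapIso e), fun W hWA hWB => ?_⟩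
  obtain ⟨U, ⟨hUA, hUB⟩, hU⟩ := hF.2 (F.map e.hom ≫ W ≫ F.map e.inv)
    (by simpa using hWA =≫ F.map e.inv) (by simpa using hWB =≫ F.map e.inv)
  refine ⟨e.inv ≫ U ≫ e.hom, ⟨by simp [reassoc_of% hUA], by simp [reassoc_of% hUB]⟩, ?_⟩
  simp [← hU]

variable {A' B' Q' R' : D} {κA' : A' ⟶ Q'} {κB' : B' ⟶ Q'}

def PhasesTransitiveBetween (κA : A ⟶ Q) (κB : B ⟶ Q) (κA' : A' ⟶ Q') (κB' : B' ⟶ Q') : Prop :=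
  ∀ f : Q ⟶ Q', (∃ g, κA ≫ f = g ≫ κA') → (∃ h, κB ≫ f = h ≫ κB') →
    ∀ U : Q ⟶ Q, κA ≫ U = κA → κB ≫ U = κB →
      ∃ V : Q' ⟶ Q', IsPhase κA' κB' V ∧ U ≫ f = f ≫ V

theorem PhasesTransitiveBetween.ofIso (h : PhasesTransitiveBetween κA κB κA' κB')
    (e : Q ≅ R) (e' : Q' ≅ R') :
    PhasesTransitiveBetween (κA ≫ e.hom) (κB ≫ e.hom) (κA' ≫ e'.hom) (κB' ≫ e'.hom) := by
  rintro f ⟨g, hg⟩ ⟨k, hk⟩ U hUA hUB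
  obtain ⟨V, ⟨hVA, hVB⟩, hV⟩ := h (e.hom ≫ f ≫ e'.inv)
    ⟨g, by simpa using hg =≫ e'.inv⟩ ⟨k, by simpa using hk =≫ e'.inv⟩
    (e.hom ≫ U ≫ e.inv) (by simpa using hUA =≫ e.inv) (by simpa using hUB =≫ e.inv)
  refine ⟨e'.inv ≫ V ≫ e'.hom, ⟨by simp [reassoc_of% hVA], by simp [reassoc_of% hVB]⟩, ?_⟩
  simpa using e.inv ≫= hV =≫ e'.hom

end PhasedCoproduct

namespace IsCoproduct₂

variable {D E : Type*} [Category D] [Category E] {A B Q Q' : D} {ιA : A ⟶ Q} {ιB : B ⟶ Q}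

noncomputable def desc (hc : IsCoproduct₂ A B Q ιA ιB) (f : A ⟶ Q') (g : B ⟶ Q') : Q ⟶ Q' :=
  (hc f g).exists.choose

@[simp]
theorem inl_desc (hc : IsCoproduct₂ A B Q ιA ιB) (f : A ⟶ Q') (g : B ⟶ Q') :
    ιA ≫ hc.desc f g = f :=
  (hc f g).exists.choose_spec.1

@[simp]
theorem inr_desc (hc : IsCoproduct₂ A B Q ιA ιB) (f : A ⟶ Q') (g : B ⟶ Q') :
    ιB ≫ hc.desc f g = g :=
  (hc f g).exists.choose_spec.2

theorem hom_ext (hc : IsCoproduct₂ A B Q ιA ιB) {h h' : Q ⟶ Q'} (hA : ιA ≫ h = ιA ≫ h')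
    (hB : ιB ≫ h = ιB ≫ h') : h = h' :=
  (hc _ _).unique ⟨hA, hB⟩ ⟨rfl, rfl⟩

theorem exists_eq_map (hc : IsCoproduct₂ A B Q ιA ιB) {G : D ⥤ E}
    (hGc : IsCoproduct₂ (G.obj A) (G.obj B) (G.obj Q) (G.map ιA) (G.map ιB))
    (f : A ⟶ Q') (g : B ⟶ Q') (w : G.obj Q ⟶ G.obj Q')
    (hA : G.map ιA ≫ w = G.map f) (hB : G.map ιB ≫ w = G.map g) :
    ∃ U : Q ⟶ Q', ιA ≫ U = f ∧ ιB ≫ U = g ∧ w = G.map U :=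
  ⟨hc.desc f g, hc.inl_desc f g, hc.inr_desc f g,
    hGc.hom_ext (by simp [hA, ← G.map_comp]) (by simp [hB, ← G.map_comp])⟩

end IsCoproduct₂

theorem gpRel.functor_map_lact {P : Set (𝟙_ C ⟶ 𝟙_ C)} {u : 𝟙_ C ⟶ 𝟙_ C} (hu : u ∈ P)
    {X Y : C} (f : X ⟶ Y) :
    (Quotient.functor (gpRel P)).map (lact u f) = (Quotient.functor (gpRel P)).map f :=
  CategoryTheory.Quotient.sound _ ⟨u, hu, rfl⟩

namespace IsGlobalPhases

variable {P : Set (𝟙_ C ⟶ 𝟙_ C)}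

theorem functor_map_eq_iff (hP : IsGlobalPhases P) {X Y : C} (f g : X ⟶ Y) :
    (Quotient.functor (gpRel P)).map f = (Quotient.functor (gpRel P)).map g ↔
      ∃ u ∈ P, f = lact u g :=
  have := hP.congruence
  Quotient.functor_map_eq_iff _ f g

theorem isPhase_map_iff (hP : IsGlobalPhases P) {A B Q : C} {ιA : A ⟶ Q} {ιB : B ⟶ Q}
    {w : Q ⟶ Q} :
    IsPhase ((Quotient.functor (gpRel P)).map ιA) ((Quotient.functor (gpRel P)).map ιB)
        ((Quotient.functor (gpRel P)).map w) ↔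
      (∃ u ∈ P, ιA ≫ w = lact u ιA) ∧ ∃ v ∈ P, ιB ≫ w = lact v ιB := by
  simp only [IsPhase, ← Functor.map_comp, hP.functor_map_eq_iff]

end IsGlobalPhases

namespace IsCoproduct₂

variable {P : Set (𝟙_ C ⟶ 𝟙_ C)} {A B Q : C} {ιA : A ⟶ Q} {ιB : B ⟶ Q}

theorem isPhasedCoproduct₂_map (hP : IsGlobalPhases P) (hc : IsCoproduct₂ A B Q ιA ιB) :
    IsPhasedCoproduct₂ ((Quotient.functor (gpRel P)).obj A) ((Quotient.functor (gpRel P)).obj B)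
      ((Quotient.functor (gpRel P)).obj Q) ((Quotient.functor (gpRel P)).map ιA)
      ((Quotient.functor (gpRel P)).map ιB) where
  lift {D} f g := by
    obtain ⟨f, rfl⟩ := (Quotient.functor (gpRel P)).map_surjective (Y := D.as) f
    obtain ⟨g, rfl⟩ := (Quotient.functor (gpRel P)).map_surjective (Y := D.as) g
    exact ⟨(Quotient.functor (gpRel P)).map (hc.desc f g),
      by rw [← Functor.map_comp, hc.inl_desc], by rw [← Functor.map_comp, hc.inr_desc]⟩
  phase {D} h h' hA hB := by
    obtain ⟨h, rfl⟩ := (Quotient.functor (gpRel P)).map_surjective (Y := D.as) h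
    obtain ⟨h', rfl⟩ := (Quotient.functor (gpRel P)).map_surjective (Y := D.as) h'
    simp only [← Functor.map_comp] at hA hB
    obtain ⟨u, hu, huA⟩ := (hP.functor_map_eq_iff _ _).1 hA.symm
    obtain ⟨v, hv, hvB⟩ := (hP.functor_map_eq_iff _ _).1 hB.symm
    refine ⟨_, hP.isPhase_map_iff.2 ⟨⟨u, hu, hc.inl_desc _ _⟩, ⟨v, hv, hc.inr_desc _ _⟩⟩, ?_⟩
    rw [← Functor.map_comp]
    congr 1
    exact hc.hom_ext (by rw [huA, ← Category.assoc, hc.inl_desc, lact_comp])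
      (by rw [hvB, ← Category.assoc, hc.inr_desc, lact_comp])

theorem stronglyPreservesPhasedCoproduct_map (hP : IsGlobalPhases P)
    (hc : IsCoproduct₂ A B Q ιA ιB) {G : C ⥤ C}
    (hGc : IsCoproduct₂ (G.obj A) (G.obj B) (G.obj Q) (G.map ιA) (G.map ιB))
    (hG : ∀ u ∈ P, ∀ {X Y : C} (f : X ⟶ Y), G.map (lact u f) = lact u (G.map f))
    {G' : Quotient (gpRel P) ⥤ Quotient (gpRel P)}
    (hG' : Quotient.functor (gpRel P) ⋙ G' = G ⋙ Quotient.functor (gpRel P)) :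
    StronglyPreservesPhasedCoproduct G' ((Quotient.functor (gpRel P)).map ιA)
      ((Quotient.functor (gpRel P)).map ιB) := by
  -- `G'` is necessarily the functor induced by `G` on the quotient
  obtain rfl := Quotient.lift_unique _ _ (by
    rintro _ _ _ _ ⟨u, hu, rfl⟩
    exact (congrArg _ (hG u hu _)).trans (gpRel.functor_map_lact hu _)) G' hG'
  refine ⟨hGc.isPhasedCoproduct₂_map hP, fun W hWA hWB => ?_⟩
  obtain ⟨w, rfl⟩ := (Quotient.functor (gpRel P)).map_surjective W
  obtain ⟨⟨u, hu, hwA⟩, ⟨v, hv, hwB⟩⟩ := hP.isPhase_map_iff.1 ⟨hWA, hWB⟩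
  rw [← hG u hu] at hwA
  rw [← hG v hv] at hwB
  obtain ⟨U, hUA, hUB, rfl⟩ := hc.exists_eq_map hGc _ _ w hwA hwB
  exact ⟨_, hP.isPhase_map_iff.2 ⟨⟨u, hu, hUA⟩, ⟨v, hv, hUB⟩⟩, rfl⟩

variable {A' B' Q' : C} {ιA' : A' ⟶ Q'} {ιB' : B' ⟶ Q'}

theorem comp_eq_comp_desc_lact (hc : IsCoproduct₂ A B Q ιA ιB)
    (hc' : IsCoproduct₂ A' B' Q' ιA' ιB') {f : Q ⟶ Q'} {gA : A ⟶ A'} {gB : B ⟶ B'}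
    (hfA : ιA ≫ f = gA ≫ ιA') (hfB : ιB ≫ f = gB ≫ ιB') {u v : 𝟙_ C ⟶ 𝟙_ C} {w : Q ⟶ Q}
    (hwA : ιA ≫ w = lact u ιA) (hwB : ιB ≫ w = lact v ιB) :
    w ≫ f = f ≫ hc'.desc (lact u ιA') (lact v ιB') :=
  hc.hom_ext
    (by rw [reassoc_of% hwA, lact_comp, hfA, ← comp_lact, reassoc_of% hfA, hc'.inl_desc])
    (by rw [reassoc_of% hwB, lact_comp, hfB, ← comp_lact, reassoc_of% hfB, hc'.inr_desc])

theorem phasesTransitiveBetween_map (hP : IsGlobalPhases P) (hc : IsCoproduct₂ A B Q ιA ιB)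
    (hc' : IsCoproduct₂ A' B' Q' ιA' ιB') :
    PhasesTransitiveBetween ((Quotient.functor (gpRel P)).map ιA)
      ((Quotient.functor (gpRel P)).map ιB) ((Quotient.functor (gpRel P)).map ιA')
      ((Quotient.functor (gpRel P)).map ιB') := by
  rintro f ⟨gA, hgA⟩ ⟨gB, hgB⟩ U hUA hUB
  obtain ⟨f, rfl⟩ := (Quotient.functor (gpRel P)).map_surjective f
  obtain ⟨gA, rfl⟩ := (Quotient.functor (gpRel P)).map_surjective gA
  obtain ⟨gB, rfl⟩ := (Quotient.functor (gpRel P)).map_surjective gB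
  obtain ⟨U, rfl⟩ := (Quotient.functor (gpRel P)).map_surjective U
  rw [← Functor.map_comp, ← Functor.map_comp, hP.functor_map_eq_iff] at hgA hgB
  obtain ⟨_, -, hfA⟩ := hgA
  obtain ⟨_, -, hfB⟩ := hgB
  rw [← lact_comp] at hfA hfB
  obtain ⟨⟨u, hu, hwA⟩, ⟨v, hv, hwB⟩⟩ := hP.isPhase_map_iff.1 ⟨hUA, hUB⟩
  refine ⟨_, hP.isPhase_map_iff.2 ⟨⟨u, hu, hc'.inl_desc _ _⟩, ⟨v, hv, hc'.inr_desc _ _⟩⟩, ?_⟩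
  rw [← Functor.map_comp, ← Functor.map_comp, hc.comp_eq_comp_desc_lact hc' hfA hfB hwA hwB]

end IsCoproduct₂

namespace IsGlobalPhases

variable {P : Set (𝟙_ C ⟶ 𝟙_ C)}

abbrev monoidalCategory (hP : IsGlobalPhases P) : MonoidalCategory (Quotient (gpRel P)) :=
  letI := hP.congruence
  Quotient.monoidalCategory hP.tensorCompatible

theorem exists_iso_functor_obj (hP : IsGlobalPhases P)
    (hcop : ∀ A B : C, ∃ (Q : C) (ιA : A ⟶ Q) (ιB : B ⟶ Q), IsCoproduct₂ A B Q ιA ιB)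
    {A B R : Quotient (gpRel P)} {κA : A ⟶ R} {κB : B ⟶ R} (c : IsPhasedCoproduct₂ A B R κA κB) :
    ∃ (Q : C) (ιA : A.as ⟶ Q) (ιB : B.as ⟶ Q) (_ : IsCoproduct₂ A.as B.as Q ιA ιB)
      (e : (Quotient.functor (gpRel P)).obj Q ≅ R),
      (Quotient.functor (gpRel P)).map ιA ≫ e.hom = κA ∧
        (Quotient.functor (gpRel P)).map ιB ≫ e.hom = κB := by
  obtain ⟨Q, ιA, ιB, hc⟩ := hcop A.as B.as
  exact ⟨Q, ιA, ιB, hc, (hc.isPhasedCoproduct₂_map hP).exists_iso c⟩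

theorem distribPhasedCoproducts (hP : IsGlobalPhases P)
    (hcop : ∀ A B : C, ∃ (Q : C) (ιA : A ⟶ Q) (ιB : B ⟶ Q), IsCoproduct₂ A B Q ιA ιB)
    (hdist : DistribCoproducts C) :
    letI := hP.monoidalCategory
    DistribPhasedCoproducts (Quotient (gpRel P)) := by
  have := hP.congruence
  intro A B₁ B₂ R κ₁ κ₂ c
  obtain ⟨Q, ι₁, ι₂, hc, e, rfl, rfl⟩ := hP.exists_iso_functor_obj hcop c
  exact ⟨(hc.stronglyPreservesPhasedCoproduct_map hP (hdist A.as hc).1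
      (fun u hu _ _ f => Central.whiskerLeft_lact (hP.central u hu) A.as f)
      (Quotient.functor_comp_tensorLeft _ A.as)).ofIso e,
    (hc.stronglyPreservesPhasedCoproduct_map hP (hdist A.as hc).2
      (fun u _ _ _ f => whiskerRight_lact u f A.as)
      (Quotient.functor_comp_tensorRight _ A.as)).ofIso e⟩

theorem phasesTransitive (hP : IsGlobalPhases P)
    (hcop : ∀ A B : C, ∃ (Q : C) (ιA : A ⟶ Q) (ιB : B ⟶ Q), IsCoproduct₂ A B Q ιA ιB) :
    PhasesTransitive (Quotient (gpRel P)) := by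
  intro _ _ _ _ _ _ _ _ _ _ c c'
  obtain ⟨Q, ιA, ιB, hc, e, rfl, rfl⟩ := hP.exists_iso_functor_obj hcop c
  obtain ⟨Q', ιA', ιB', hc', e', rfl, rfl⟩ := hP.exists_iso_functor_obj hcop c'
  exact (hc.phasesTransitiveBetween_map hP hc').ofIso e e'

end IsGlobalPhases

theorem stmt_10_general
    (hcop : ∀ A B : C, ∃ (Q : C) (κA : A ⟶ Q) (κB : B ⟶ Q), IsCoproduct₂ A B Q κA κB)
    (hdist : DistribCoproducts C)
    (P : Set (𝟙_ C ⟶ 𝟙_ C)) (hP : IsGlobalPhases P) :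
    (∀ {X X' Y Y' : C} (f f' : X ⟶ X') (g g' : Y ⟶ Y'),
      gpRel P f f' → gpRel P g g' → gpRel P (f ⊗ₘ g) (f' ⊗ₘ g')) ∧
    ∃ M : MonoidalCategory (Quotient (gpRel P)), QuotMonCompat C P (M := M) := by
  refine ⟨fun _ _ _ _ => hP.tensorCompatible, hP.monoidalCategory, ?_⟩
  exact QuotMonCompat.mk (M := hP.monoidalCategory)
    (hunit := rfl) (hobj := fun _ _ => rfl)
    (htens := fun _ _ => by simp only [eqToHom_refl, Category.id_comp, Category.comp_id]; rfl)
    (hassoc := fun _ _ _ => by simp only [eqToHom_refl, Category.id_comp, Category.comp_id]; rfl)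
    (hlam := fun _ => by simp only [eqToHom_refl, Category.id_comp]; rfl)
    (hrho := fun _ => by simp only [eqToHom_refl, Category.id_comp]; rfl)
    (himg := fun hc => hc.isPhasedCoproduct₂_map hP)
    (hinitial := fun _ hZ => ⟨Quotient.isInitialFunctorObj hZ⟩)
    (hhas := fun A B =>
      have ⟨_, _, _, hc⟩ := hcop A.as B.as
      ⟨_, _, _, hc.isPhasedCoproduct₂_map hP⟩)
    (hdistQ := hP.distribPhasedCoproducts hcop hdist)
    (htransQ := hP.phasesTransitive hcop)

/-- for a monoidal category `C` with distributive finite coproducts and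
a choice of global phases `P`, the tensor descends to the quotient `C_P`, which becomes
a monoidal category with distributive finite phased coproducts with transitive phases,
the images of coproducts being phased coproducts. -/
theorem stmt_10 [HasInitial C]
    (hcop : ∀ A B : C, ∃ (Q : C) (κA : A ⟶ Q) (κB : B ⟶ Q), IsCoproduct₂ A B Q κA κB)
    (hdist : DistribCoproducts C)
    (P : Set (𝟙_ C ⟶ 𝟙_ C)) (hP : IsGlobalPhases P) :
    (∀ {X X' Y Y' : C} (f f' : X ⟶ X') (g g' : Y ⟶ Y'),
      gpRel P f f' → gpRel P g g' → gpRel P (f ⊗ₘ g) (f' ⊗ₘ g')) ∧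
    ∃ M : MonoidalCategory (Quotient (gpRel P)), QuotMonCompat C P (M := M) :=
  stmt_10_general hcop hdist P hP
end
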